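/- arXiv:math/0703339 — 3 statements merged into one kernel-verified Lean document; each statement's English description precedes it below -/
import Mathlib

section
/- For every a ∈ A, the block operator β^(h)(a) on ℂ ⊕ k satisfies β^(h)(a) = V_h* (ε(a) ⊕ ν(a)) V_h, where V_h is the unitary on ℂ ⊕ k given by V_h(α, η) = α·Ω_h + ⟨ξ, η⟩·Σ_h + (0, η − ⟨ξ, η⟩·ξ) with Ω_h := (√(1−λh), √(λh)·ξ) and Σ_h := (−√(λh), √(1−λh)·ξ), and ε(a) ⊕ ν(a) denotes the block-diagonal operator acting as multiplication by ε(a) on ℂ and as ν(a) on k. -/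
noncomputable section

variable {A : Type*} [NormedRing A] [StarRing A] [CStarRing A] [NormedAlgebra ℂ A]
  [StarModule ℂ A] [CompleteSpace A]
variable {k : Type*} [NormedAddCommGroup k] [InnerProductSpace ℂ k] [CompleteSpace k]

/-- The rank-one operator `|u⟩⟨v| : η ↦ ⟨v, η⟩ • u`. -/
def rankOne (u v : k) : k →L[ℂ] k := (innerSL ℂ v).smulRight u

/-- The normalised vector `ξ = ξ̃ / ‖ξ̃‖`. -/
def xi (ξt : k) : k := (‖ξt‖⁻¹ : ℂ) • ξt

/-- The state `ν_ξ(a) = ⟨ξ, ν(a) ξ⟩`. -/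
def nuxi (ν : A →⋆ₐ[ℂ] (k →L[ℂ] k)) (ξt : k) (a : A) : ℂ :=
  inner ℂ (xi ξt) ((ν a) (xi ξt))

/-- `β₁⁽ʰ⁾(a) = (1 − λh) ε(a) + λh ν_ξ(a)`, where `λ = ‖ξ̃‖²`. -/
def beta1 (ε : A →⋆ₐ[ℂ] ℂ) (ν : A →⋆ₐ[ℂ] (k →L[ℂ] k)) (ξt : k) (h : ℝ) (a : A) : ℂ :=
  ((1 - ‖ξt‖ ^ 2 * h : ℝ) : ℂ) * ε a + ((‖ξt‖ ^ 2 * h : ℝ) : ℂ) * nuxi ν ξt a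

/-- `β₃⁽ʰ⁾(a) = √(λh) (ν(a)ξ − √(1−λh) ε(a) ξ + (√(1−λh) − 1) ν_ξ(a) ξ)`. -/
def beta3 (ε : A →⋆ₐ[ℂ] ℂ) (ν : A →⋆ₐ[ℂ] (k →L[ℂ] k)) (ξt : k) (h : ℝ) (a : A) : k :=
  (Real.sqrt (‖ξt‖ ^ 2 * h) : ℂ) •
    ((ν a) (xi ξt) - ((Real.sqrt (1 - ‖ξt‖ ^ 2 * h) : ℂ) * ε a) • xi ξt
      + (((Real.sqrt (1 - ‖ξt‖ ^ 2 * h) : ℂ) - 1) * nuxi ν ξt a) • xi ξt)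

/-- `β₄⁽ʰ⁾(a) = (λh ε(a) + (2 − 2√(1−λh) − λh) ν_ξ(a)) |ξ⟩⟨ξ|
  + (√(1−λh) − 1)(|ν(a)ξ⟩⟨ξ| + |ξ⟩⟨ν(a*)ξ|) + ν(a)`. -/
def beta4 (ε : A →⋆ₐ[ℂ] ℂ) (ν : A →⋆ₐ[ℂ] (k →L[ℂ] k)) (ξt : k) (h : ℝ) (a : A) :
    k →L[ℂ] k :=
  (((‖ξt‖ ^ 2 * h : ℝ) : ℂ) * ε a
      + ((2 - 2 * Real.sqrt (1 - ‖ξt‖ ^ 2 * h) - ‖ξt‖ ^ 2 * h : ℝ) : ℂ) * nuxi ν ξt a) •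
    rankOne (xi ξt) (xi ξt)
  + ((Real.sqrt (1 - ‖ξt‖ ^ 2 * h) : ℂ) - 1) • rankOne ((ν a) (xi ξt)) (xi ξt)
  + ((Real.sqrt (1 - ‖ξt‖ ^ 2 * h) : ℂ) - 1) • rankOne (xi ξt) ((ν (star a)) (xi ξt))
  + ν a

/-- The block operator `β⁽ʰ⁾(a)(α, η) = (β₁(a) α + ⟨β₃(a*), η⟩, α β₃(a) + β₄(a) η)`
on the Hilbert space `ℂ ⊕ k`. -/
def betaOp (ε : A →⋆ₐ[ℂ] ℂ) (ν : A →⋆ₐ[ℂ] (k →L[ℂ] k)) (ξt : k) (h : ℝ) (a : A) :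
    WithLp 2 (ℂ × k) →L[ℂ] WithLp 2 (ℂ × k) :=
  (WithLp.prodContinuousLinearEquiv 2 ℂ ℂ k).symm.toContinuousLinearMap ∘L
    (ContinuousLinearMap.prod
      (beta1 ε ν ξt h a • ContinuousLinearMap.fst ℂ ℂ k
        + (innerSL ℂ (beta3 ε ν ξt h (star a))) ∘L ContinuousLinearMap.snd ℂ ℂ k)
      ((ContinuousLinearMap.fst ℂ ℂ k).smulRight (beta3 ε ν ξt h a)
        + (beta4 ε ν ξt h a) ∘L ContinuousLinearMap.snd ℂ ℂ k)) ∘L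
    (WithLp.prodContinuousLinearEquiv 2 ℂ ℂ k).toContinuousLinearMap

/-- The block-diagonal operator acting as multiplication by `c` on `ℂ` and as `g` on `k`. -/
def blockDiag (c : ℂ) (g : k →L[ℂ] k) : WithLp 2 (ℂ × k) →L[ℂ] WithLp 2 (ℂ × k) :=
  (WithLp.prodContinuousLinearEquiv 2 ℂ ℂ k).symm.toContinuousLinearMap ∘L
    (ContinuousLinearMap.prodMap (c • (1 : ℂ →L[ℂ] ℂ)) g) ∘L
      (WithLp.prodContinuousLinearEquiv 2 ℂ ℂ k).toContinuousLinearMap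

/-- `β⁽ʰ⁾(a) = V_h* (ε(a) ⊕ ν(a)) V_h`, where `V_h` is the unitary given by
`V_h(α, η) = α·Ω_h + ⟨ξ, η⟩·Σ_h + (0, η − ⟨ξ, η⟩·ξ)` with `Ω_h := (√(1−λh), √(λh)·ξ)`,
`Σ_h := (−√(λh), √(1−λh)·ξ)`. -/
theorem statement3
    (A : Type*) [NormedRing A] [StarRing A] [CStarRing A] [NormedAlgebra ℂ A]
    [StarModule ℂ A] [CompleteSpace A]
    (k : Type*) [NormedAddCommGroup k] [InnerProductSpace ℂ k] [CompleteSpace k]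
    (ε : A →⋆ₐ[ℂ] ℂ) (ν : A →⋆ₐ[ℂ] (k →L[ℂ] k))
    (ξt : k) (hξt : ξt ≠ 0)
    (lam : ℝ) (hlam : lam = ‖ξt‖ ^ 2)
    (h : ℝ) (hh0 : 0 < h) (hh1 : h ≤ 1 / lam)
    (Ωh Sh : WithLp 2 (ℂ × k))
    (hΩh : Ωh = (WithLp.equiv 2 (ℂ × k)).symm
      ((Real.sqrt (1 - lam * h) : ℂ), (Real.sqrt (lam * h) : ℂ) • xi ξt))
    (hSh : Sh = (WithLp.equiv 2 (ℂ × k)).symm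
      ((-(Real.sqrt (lam * h)) : ℂ), (Real.sqrt (1 - lam * h) : ℂ) • xi ξt))
    (Vh : WithLp 2 (ℂ × k) →L[ℂ] WithLp 2 (ℂ × k))
    (hVh : ∀ (α : ℂ) (η : k),
      Vh ((WithLp.equiv 2 (ℂ × k)).symm (α, η))
        = α • Ωh + (inner ℂ (xi ξt) η : ℂ) • Sh
            + (WithLp.equiv 2 (ℂ × k)).symm
                ((0 : ℂ), η - (inner ℂ (xi ξt) η : ℂ) • xi ξt)) :
    ∀ a : A,
      betaOp ε ν ξt h a
        = ContinuousLinearMap.adjoint Vh ∘L blockDiag (ε a) (ν a) ∘L Vh := by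
  
  subst hlam
  intro a
  have hL0 : (0:ℝ) ≤ ‖ξt‖ ^ 2 * h := by positivity
  have hn0 : (0:ℝ) < ‖ξt‖ ^ 2 := by
    have := norm_pos_iff.mpr hξt; positivity
  have hL1 : ‖ξt‖ ^ 2 * h ≤ 1 := by
    rw [div_eq_inv_mul, mul_one] at hh1
    calc ‖ξt‖ ^ 2 * h ≤ ‖ξt‖ ^ 2 * (‖ξt‖ ^ 2)⁻¹ := by
          exact mul_le_mul_of_nonneg_left hh1 (le_of_lt hn0)
      _ = 1 := mul_inv_cancel₀ (ne_of_gt hn0)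
  have hs2 : ((Real.sqrt (1 - ‖ξt‖ ^ 2 * h) : ℝ) : ℂ) ^ 2 = 1 - ((‖ξt‖ ^ 2 * h : ℝ) : ℂ) := by
    rw [← Complex.ofReal_pow, Real.sq_sqrt (by linarith)]
    push_cast; ring
  have ht2 : ((Real.sqrt (‖ξt‖ ^ 2 * h) : ℝ) : ℂ) ^ 2 = ((‖ξt‖ ^ 2 * h : ℝ) : ℂ) := by
    rw [← Complex.ofReal_pow, Real.sq_sqrt hL0]
  have hξ1 : (inner ℂ (xi ξt) (xi ξt) : ℂ) = 1 := by
    rw [inner_self_eq_norm_sq_to_K]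
    have : ‖xi ξt‖ = 1 := by
      simp [xi, norm_smul]
      exact inv_mul_cancel₀ (norm_ne_zero_iff.mpr hξt)
    rw [this]; norm_num
  have hadj : ∀ u v : k, (inner ℂ ((star (ν a)) u) v : ℂ) = inner ℂ u ((ν a) v) := by
    intro u v
    rw [ContinuousLinearMap.star_eq_adjoint]
    exact ContinuousLinearMap.adjoint_inner_left _ _ _
  apply ContinuousLinearMap.ext; intro y
  apply ext_inner_left ℂ; intro x
  rw [ContinuousLinearMap.comp_apply, ContinuousLinearMap.comp_apply,
    ContinuousLinearMap.adjoint_inner_right]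
  have hx : Vh x = x.fst • Ωh + (inner ℂ (xi ξt) x.snd : ℂ) • Sh
      + (WithLp.equiv 2 (ℂ × k)).symm ((0 : ℂ), x.snd - (inner ℂ (xi ξt) x.snd : ℂ) • xi ξt) :=
    hVh x.fst x.snd
  have hy : Vh y = y.fst • Ωh + (inner ℂ (xi ξt) y.snd : ℂ) • Sh
      + (WithLp.equiv 2 (ℂ × k)).symm ((0 : ℂ), y.snd - (inner ℂ (xi ξt) y.snd : ℂ) • xi ξt) :=
    hVh y.fst y.snd
  rw [hx, hy, hΩh, hSh]
  simp only [betaOp, blockDiag, beta1, beta3, beta4, nuxi, rankOne,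
    ContinuousLinearMap.comp_apply, ContinuousLinearEquiv.coe_coe,
    WithLp.prodContinuousLinearEquiv_apply, WithLp.prodContinuousLinearEquiv_symm_apply,
    ContinuousLinearMap.prod_apply, ContinuousLinearMap.add_apply,
    ContinuousLinearMap.coe_fst', ContinuousLinearMap.coe_snd',
    ContinuousLinearMap.smul_apply, ContinuousLinearMap.one_apply,
    ContinuousLinearMap.coe_prodMap', Prod.map, ContinuousLinearMap.smulRight_apply,
    innerSL_apply_apply, WithLp.prod_inner_apply, Equiv.apply_symm_apply, RCLike.inner_apply,
    inner_zero_left, inner_zero_right, map_zero, mul_zero, zero_mul, add_zero, zero_add,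
    map_neg, neg_mul, mul_neg, inner_neg_left, inner_neg_right,
    WithLp.ofLp_fst, WithLp.ofLp_snd, ContinuousLinearMap.sub_apply, RCLike.star_def,
    WithLp.equiv_symm_apply, WithLp.toLp_fst, WithLp.toLp_snd,
    WithLp.add_fst, WithLp.add_snd, WithLp.smul_fst, WithLp.smul_snd,
    Prod.fst, Prod.snd,
    map_add, map_sub, map_smul, map_star,
    inner_add_left, inner_add_right, inner_sub_left, inner_sub_right,
    inner_smul_left, inner_smul_right, smul_eq_mul,
    Complex.conj_ofReal, map_mul, map_sub, map_one, map_ofNat,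
    RingHom.id_apply, starRingEnd_self_apply, inner_conj_symm, hξ1, hadj,
    smul_add, smul_sub, smul_smul]
  push_cast
  push_cast at hs2 ht2
  linear_combination
    (-((starRingEnd ℂ) x.fst * ε a * y.fst)
        - (inner ℂ (xi ξt) ((ν a) (xi ξt)) : ℂ) * (inner ℂ (xi ξt) y.snd : ℂ)
          * (inner ℂ x.snd (xi ξt) : ℂ)) * hs2
    + (-((starRingEnd ℂ) x.fst * (inner ℂ (xi ξt) ((ν a) (xi ξt)) : ℂ) * y.fst)
        - ε a * (inner ℂ (xi ξt) y.snd : ℂ) * (inner ℂ x.snd (xi ξt) : ℂ)) * ht2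
end
end

section
/- For every a ∈ A, the operator-norm estimate ‖β₄^(h)(a) − ν(a)‖ ≤ 4·λ·h·‖a‖ holds. -/
noncomputable section

variable {A : Type*} [NormedRing A] [StarRing A] [CStarRing A] [NormedAlgebra ℂ A]
  [StarModule ℂ A] [CompleteSpace A]
variable {k : Type*} [NormedAddCommGroup k] [InnerProductSpace ℂ k] [CompleteSpace k]

/-- the operator-norm estimate `‖β₄⁽ʰ⁾(a) − ν(a)‖ ≤ 4 λ h ‖a‖`,
where `λ = ‖ξ̃‖²`. -/
theorem statement7
    (A : Type*) [NormedRing A] [StarRing A] [CStarRing A] [NormedAlgebra ℂ A]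
    [StarModule ℂ A] [CompleteSpace A]
    (k : Type*) [NormedAddCommGroup k] [InnerProductSpace ℂ k] [CompleteSpace k]
    (ε : A →⋆ₐ[ℂ] ℂ) (ν : A →⋆ₐ[ℂ] (k →L[ℂ] k))
    (ξt : k) (hξt : ξt ≠ 0)
    (lam : ℝ) (hlam : lam = ‖ξt‖ ^ 2)
    (h : ℝ) (hh0 : 0 < h) (hh1 : h ≤ 1 / lam) :
    ∀ a : A, ‖beta4 ε ν ξt h a - ν a‖ ≤ 4 * lam * h * ‖a‖ := by
  
  letI : CStarAlgebra A := {}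
  intro a
  subst hlam
  have hξpos : (0:ℝ) < ‖ξt‖ ^ 2 := pow_pos (norm_pos_iff.2 hξt) 2
  set s : ℝ := ‖ξt‖ ^ 2 * h with hsdef
  have hs0 : 0 < s := mul_pos hξpos hh0
  have hs1 : s ≤ 1 := by
    rw [hsdef]
    calc ‖ξt‖ ^ 2 * h ≤ ‖ξt‖ ^ 2 * (1 / ‖ξt‖ ^ 2) := by
          exact mul_le_mul_of_nonneg_left hh1 hξpos.le
      _ = 1 := by field_simp
  set t : ℝ := Real.sqrt (1 - s) with htdef
  have hsq : t ^ 2 = 1 - s := Real.sq_sqrt (by linarith)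
  have ht1 : t ≤ 1 := Real.sqrt_le_one.2 (by linarith)
  have ht0 : 0 ≤ t := Real.sqrt_nonneg _
  have key1 : 1 - t ≤ s := by nlinarith
  have key2 : 0 ≤ 2 - 2 * t - s := by nlinarith
  -- basic norm facts
  have hxi : ‖xi ξt‖ = 1 := by
    rw [xi, norm_smul]
    have : (‖ξt‖ : ℝ) ≠ 0 := norm_ne_zero_iff.2 hξt
    simp [norm_inv, this]
  have hrank : ∀ u v : k, ‖rankOne u v‖ ≤ ‖u‖ * ‖v‖ := by
    intro u v
    rw [rankOne, ContinuousLinearMap.norm_smulRight_apply, innerSL_apply_norm]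
    exact le_of_eq (mul_comm _ _)
  have hν : ∀ b : A, ‖ν b‖ ≤ ‖b‖ := fun b => NonUnitalStarAlgHom.norm_apply_le ν b
  have hνξ : ‖(ν a) (xi ξt)‖ ≤ ‖a‖ := by
    calc ‖(ν a) (xi ξt)‖ ≤ ‖ν a‖ * ‖xi ξt‖ := (ν a).le_opNorm _
      _ = ‖ν a‖ := by rw [hxi, mul_one]
      _ ≤ ‖a‖ := hν a
  have hνξ' : ‖(ν (star a)) (xi ξt)‖ ≤ ‖a‖ := by
    calc ‖(ν (star a)) (xi ξt)‖ ≤ ‖ν (star a)‖ * ‖xi ξt‖ := (ν (star a)).le_opNorm _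
      _ = ‖ν (star a)‖ := by rw [hxi, mul_one]
      _ ≤ ‖star a‖ := hν _
      _ = ‖a‖ := norm_star a
  have hnuxi : ‖nuxi ν ξt a‖ ≤ ‖a‖ := by
    rw [nuxi]
    calc ‖(inner ℂ (xi ξt) ((ν a) (xi ξt)) : ℂ)‖ ≤ ‖xi ξt‖ * ‖(ν a) (xi ξt)‖ :=
          norm_inner_le_norm _ _
      _ ≤ 1 * ‖a‖ := by rw [hxi]; exact mul_le_mul_of_nonneg_left hνξ zero_le_one
      _ = ‖a‖ := one_mul _
  have hε : ‖ε a‖ ≤ ‖a‖ := NonUnitalStarAlgHom.norm_apply_le ε a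
  -- decompose
  set c1 : ℂ := ((s : ℝ) : ℂ) * ε a + ((2 - 2 * t - s : ℝ) : ℂ) * nuxi ν ξt a with hc1
  set c2 : ℂ := ((t : ℝ) : ℂ) - 1 with hc2
  have hdiff : beta4 ε ν ξt h a - ν a
      = c1 • rankOne (xi ξt) (xi ξt) + c2 • rankOne ((ν a) (xi ξt)) (xi ξt)
        + c2 • rankOne (xi ξt) ((ν (star a)) (xi ξt)) := by
    rw [beta4, hc1, hc2, htdef, hsdef]
    abel
  rw [hdiff]
  have hc1norm : ‖c1‖ ≤ 2 * s * ‖a‖ := by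
    calc ‖c1‖ ≤ ‖((s : ℝ) : ℂ) * ε a‖ + ‖((2 - 2 * t - s : ℝ) : ℂ) * nuxi ν ξt a‖ :=
          norm_add_le _ _
      _ = s * ‖ε a‖ + (2 - 2 * t - s) * ‖nuxi ν ξt a‖ := by
          rw [norm_mul, norm_mul, Complex.norm_real, Complex.norm_real,
            Real.norm_of_nonneg hs0.le, Real.norm_of_nonneg key2]
      _ ≤ s * ‖a‖ + s * ‖a‖ := by
          have h1 : s * ‖ε a‖ ≤ s * ‖a‖ := mul_le_mul_of_nonneg_left hε hs0.le
          have h2 : (2 - 2 * t - s) * ‖nuxi ν ξt a‖ ≤ s * ‖a‖ :=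
            mul_le_mul (by linarith) hnuxi (norm_nonneg _) hs0.le
          linarith
      _ = 2 * s * ‖a‖ := by ring
  have hc2norm : ‖c2‖ ≤ s := by
    rw [hc2]
    have : ((t : ℝ) : ℂ) - 1 = (((t - 1 : ℝ)) : ℂ) := by push_cast; ring
    rw [this, Complex.norm_real, Real.norm_eq_abs, abs_sub_comm, abs_of_nonneg (by linarith)]
    linarith
  have b1 : ‖c1 • rankOne (xi ξt) (xi ξt)‖ ≤ 2 * s * ‖a‖ := by
    rw [norm_smul]
    calc ‖c1‖ * ‖rankOne (xi ξt) (xi ξt)‖ ≤ (2 * s * ‖a‖) * (‖xi ξt‖ * ‖xi ξt‖) :=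
          mul_le_mul hc1norm (hrank _ _) (norm_nonneg _) (by positivity)
      _ = 2 * s * ‖a‖ := by rw [hxi]; ring
  have b2 : ‖c2 • rankOne ((ν a) (xi ξt)) (xi ξt)‖ ≤ s * ‖a‖ := by
    rw [norm_smul]
    calc ‖c2‖ * ‖rankOne ((ν a) (xi ξt)) (xi ξt)‖
        ≤ s * (‖(ν a) (xi ξt)‖ * ‖xi ξt‖) :=
          mul_le_mul hc2norm (hrank _ _) (norm_nonneg _) hs0.le
      _ ≤ s * ‖a‖ := by
          rw [hxi, mul_one]
          exact mul_le_mul_of_nonneg_left hνξ hs0.le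
  have b3 : ‖c2 • rankOne (xi ξt) ((ν (star a)) (xi ξt))‖ ≤ s * ‖a‖ := by
    rw [norm_smul]
    calc ‖c2‖ * ‖rankOne (xi ξt) ((ν (star a)) (xi ξt))‖
        ≤ s * (‖xi ξt‖ * ‖(ν (star a)) (xi ξt)‖) :=
          mul_le_mul hc2norm (hrank _ _) (norm_nonneg _) hs0.le
      _ ≤ s * ‖a‖ := by
          rw [hxi, one_mul]
          exact mul_le_mul_of_nonneg_left hνξ' hs0.le
  calc ‖c1 • rankOne (xi ξt) (xi ξt) + c2 • rankOne ((ν a) (xi ξt)) (xi ξt)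
        + c2 • rankOne (xi ξt) ((ν (star a)) (xi ξt))‖
      ≤ ‖c1 • rankOne (xi ξt) (xi ξt) + c2 • rankOne ((ν a) (xi ξt)) (xi ξt)‖
        + ‖c2 • rankOne (xi ξt) ((ν (star a)) (xi ξt))‖ := norm_add_le _ _
    _ ≤ ‖c1 • rankOne (xi ξt) (xi ξt)‖ + ‖c2 • rankOne ((ν a) (xi ξt)) (xi ξt)‖
        + ‖c2 • rankOne (xi ξt) ((ν (star a)) (xi ξt))‖ := by
          gcongr; exact norm_add_le _ _
    _ ≤ 2 * s * ‖a‖ + s * ‖a‖ + s * ‖a‖ := by gcongr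
    _ = 4 * ‖ξt‖ ^ 2 * h * ‖a‖ := by rw [hsdef]; ring
end
end

section
/- The quantum random walk has the increment property: for all m, n ∈ ℕ, J_{m+n} = ι_{m,n} ∘ (J_m ⊗ J_n) ∘ Δ, where ι_{m,n} : T_m ⊗ T_n → T_{m+n} is the canonical algebra isomorphism defined recursively by ι_{m,0} = the right unitor T_m ⊗ ℂ ≅ T_m and ι_{m,n+1} = (ι_{m,n} ⊗ id_B) ∘ α with α : T_m ⊗ (T_n ⊗ B) ≅ (T_m ⊗ T_n) ⊗ B the associator. -/
noncomputable section

open TensorProduct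

/-- The iterated tensor powers `T 0 = ℂ`, `T (n+1) = T n ⊗ B`, bundled as `ℂ`-modules. -/
def T (B : Type) [AddCommGroup B] [Module ℂ B] : ℕ → ModuleCat ℂ
  | 0 => ModuleCat.of ℂ ℂ
  | n + 1 => ModuleCat.of ℂ (↑(T B n) ⊗[ℂ] B)

/-- The quantum random walk `J_0 = ε`, `J_{n+1} = (J_n ⊗ J) ∘ Δ`. -/
def Jn {A B : Type} [Ring A] [Bialgebra ℂ A] [Ring B] [Algebra ℂ B]
    (J : A →ₗ[ℂ] B) : (n : ℕ) → A →ₗ[ℂ] ↑(T B n)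
  | 0 => (Coalgebra.counit : A →ₗ[ℂ] ℂ)
  | n + 1 => (TensorProduct.map (Jn J n) J) ∘ₗ (Coalgebra.comul : A →ₗ[ℂ] A ⊗[ℂ] A)
/-- The canonical identification `ι_{m,n} : T_m ⊗ T_n → T_{m+n}`, defined recursively via
the right unitor and the associator. -/
def iota {B : Type} [Ring B] [Algebra ℂ B] (m : ℕ) :
    (n : ℕ) → (↑(T B m) ⊗[ℂ] ↑(T B n)) →ₗ[ℂ] ↑(T B (m + n))
  | 0 => (TensorProduct.rid ℂ ↑(T B m)).toLinearMap
  | n + 1 => (TensorProduct.map (iota m n) (LinearMap.id : B →ₗ[ℂ] B)) ∘ₗ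
      (TensorProduct.assoc ℂ (↑(T B m)) (↑(T B n)) B).symm.toLinearMap

/-- the quantum random walk has the increment property
`J_{m+n} = ι_{m,n} ∘ (J_m ⊗ J_n) ∘ Δ`. -/
theorem statement12 {A B : Type} [Ring A] [Bialgebra ℂ A] [Ring B] [Algebra ℂ B]
    (J : A →ₐ[ℂ] B) (m n : ℕ) :
    Jn J.toLinearMap (m + n)
      = iota m n ∘ₗ TensorProduct.map (Jn J.toLinearMap m) (Jn J.toLinearMap n) ∘ₗ
          (Coalgebra.comul : A →ₗ[ℂ] A ⊗[ℂ] A) := by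
  induction n with
  | zero =>
    show Jn J.toLinearMap m
        = (TensorProduct.rid ℂ ↑(T B m)).toLinearMap ∘ₗ
          TensorProduct.map (Jn J.toLinearMap m) (Coalgebra.counit : A →ₗ[ℂ] ℂ) ∘ₗ
          (Coalgebra.comul : A →ₗ[ℂ] A ⊗[ℂ] A)
    rw [← LinearMap.rTensor_comp_lTensor, LinearMap.comp_assoc,
      Coalgebra.lTensor_counit_comp_comul]
    ext a
    simp
  | succ n ih =>
    have lhs : Jn J.toLinearMap (m + (n + 1))
        = TensorProduct.map (Jn J.toLinearMap (m + n)) J.toLinearMap ∘ₗ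
          (Coalgebra.comul : A →ₗ[ℂ] A ⊗[ℂ] A) := rfl
    have iot : (iota m (n + 1) : (↑(T B m) ⊗[ℂ] ↑(T B (n+1))) →ₗ[ℂ] ↑(T B (m + (n+1))))
        = (TensorProduct.map (iota m n) (LinearMap.id : B →ₗ[ℂ] B)) ∘ₗ
          (TensorProduct.assoc ℂ (↑(T B m)) (↑(T B n)) B).symm.toLinearMap := rfl
    have jn1 : Jn J.toLinearMap (n + 1)
        = TensorProduct.map (Jn J.toLinearMap n) J.toLinearMap ∘ₗ
          (Coalgebra.comul : A →ₗ[ℂ] A ⊗[ℂ] A) := rfl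
    rw [lhs, iot, jn1, ih]
    -- split the left factor of the map on the LHS
    rw [show TensorProduct.map
          ((iota m n ∘ₗ TensorProduct.map (Jn J.toLinearMap m) (Jn J.toLinearMap n) ∘ₗ
            (Coalgebra.comul : A →ₗ[ℂ] A ⊗[ℂ] A))) J.toLinearMap
        = TensorProduct.map (iota m n) LinearMap.id ∘ₗ
          TensorProduct.map (TensorProduct.map (Jn J.toLinearMap m) (Jn J.toLinearMap n))
            J.toLinearMap ∘ₗ
          LinearMap.rTensor A (Coalgebra.comul : A →ₗ[ℂ] A ⊗[ℂ] A) from by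
      rw [LinearMap.rTensor, ← TensorProduct.map_comp, ← TensorProduct.map_comp]
      simp]
    -- split the right factor of the map on the RHS
    show (TensorProduct.map (iota m n) (LinearMap.id : B →ₗ[ℂ] B) ∘ₗ
          TensorProduct.map (TensorProduct.map (Jn J.toLinearMap m) (Jn J.toLinearMap n))
            J.toLinearMap ∘ₗ
          LinearMap.rTensor A (Coalgebra.comul : A →ₗ[ℂ] A ⊗[ℂ] A)) ∘ₗ
          (Coalgebra.comul : A →ₗ[ℂ] A ⊗[ℂ] A)
        = (TensorProduct.map (iota m n) (LinearMap.id : B →ₗ[ℂ] B) ∘ₗ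
          (TensorProduct.assoc ℂ (↑(T B m)) (↑(T B n)) B).symm.toLinearMap) ∘ₗ
          TensorProduct.map (Jn J.toLinearMap m)
            (TensorProduct.map (Jn J.toLinearMap n) J.toLinearMap ∘ₗ
              (Coalgebra.comul : A →ₗ[ℂ] A ⊗[ℂ] A)) ∘ₗ
          (Coalgebra.comul : A →ₗ[ℂ] A ⊗[ℂ] A)
    rw [show TensorProduct.map (Jn J.toLinearMap m)
          (TensorProduct.map (Jn J.toLinearMap n) J.toLinearMap ∘ₗ
            (Coalgebra.comul : A →ₗ[ℂ] A ⊗[ℂ] A))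
        = TensorProduct.map (Jn J.toLinearMap m)
            (TensorProduct.map (Jn J.toLinearMap n) J.toLinearMap) ∘ₗ
          LinearMap.lTensor A (Coalgebra.comul : A →ₗ[ℂ] A ⊗[ℂ] A) from by
      rw [LinearMap.lTensor, ← TensorProduct.map_comp]
      simp]
    rw [LinearMap.comp_assoc, LinearMap.comp_assoc, ← Coalgebra.coassoc_symm]
    rw [LinearMap.comp_assoc]
    congr 1
    rw [← LinearMap.comp_assoc, ← LinearMap.comp_assoc,
      TensorProduct.map_map_comp_assoc_symm_eq, LinearMap.comp_assoc]
    simp only [LinearMap.comp_assoc]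
end
end
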